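/- arXiv:2509.11657 — 2 statements merged into one kernel-verified Lean document; each statement's English description precedes it below -/
import Mathlib

section
/- Let F = (G + r₁) − (H + r₂) where G + r₁ is ρ₁-strongly convex, H + r₂ is ρ₂-strongly convex with H and r₂ differentiable, and set ρ = ρ₁ + ρ₂. Suppose x^{t+1} minimizes x ↦ G(x) + r₁(x) − ⟨g + ∇r₂(x^t), x⟩ for some vector g. Then for any γ ∈ (0, ρ): F(x^{t+1}) ≤ F(x^t) + (1/(2γ))‖g − ∇H(x^t)‖² − ((ρ − γ)/2)‖x^{t+1} − x^t‖². -/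
/-!
Strong convexity gives two quadratic lower bounds. Since `x1` minimizes `G + r₁ - ⟪g + ∇r₂(xt), ·⟫`,
the vector `g + ∇r₂(xt)` is a subgradient of `G + r₁` at `x1`, so `G + r₁` lies above that affine
minorant plus `ρ₁/2 ‖· - x1‖²`; and `H + r₂` lies above its tangent at `xt` plus `ρ₂/2 ‖· - xt‖²`.
Subtracting, the linear terms leave only `⟪g - ∇H(xt), x1 - xt⟫`, which Young's inequality bounds by
`‖g - ∇H(xt)‖² / (2γ) + γ/2 ‖x1 - xt‖²`.
-/

open RealInnerProductSpace Filter Topology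

section

variable {E : Type*} [NormedAddCommGroup E]

theorem ConvexOn.add_fderiv_sub_le [NormedSpace ℝ E] {f : E → ℝ} {f' : E →L[ℝ] ℝ} {x : E}
    (hf : ConvexOn ℝ Set.univ f) (hd : HasFDerivAt f f' x) (y : E) :
    f x + f' (y - x) ≤ f y := by
  let ℓ := AffineMap.lineMap (k := ℝ) x y
  have hℓ : HasDerivAt ℓ (y - x) 0 := AffineMap.hasDerivAt_lineMap
  have hconv : ConvexOn ℝ Set.univ (f ∘ ℓ) := hf.comp_affineMap ℓ
  have hderiv : HasDerivAt (f ∘ ℓ) (f' (y - x)) 0 := by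
    refine HasFDerivAt.comp_hasDerivAt (0 : ℝ) ?_ hℓ
    simpa [ℓ] using hd
  have := hconv.le_slope_of_hasDerivAt trivial trivial zero_lt_one hderiv
  simp only [slope_def_field, Function.comp_apply, ℓ, AffineMap.lineMap_apply_zero,
    AffineMap.lineMap_apply_one, sub_zero, div_one] at this
  linarith

variable [InnerProductSpace ℝ E]

theorem StrongConvexOn.add_inner_add_le_of_hasGradientAt [CompleteSpace E] {f : E → ℝ}
    {f' x : E} {m : ℝ}
    (hf : StrongConvexOn Set.univ m f) (hd : HasGradientAt f f' x) (y : E) :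
    f x + ⟪f', y - x⟫ + m / 2 * ‖y - x‖ ^ 2 ≤ f y := by
  have hconv := strongConvexOn_iff_convex.mp hf
  have hd' := hd.hasFDerivAt.sub ((hasStrictFDerivAt_norm_sq x).hasFDerivAt.const_mul (m / 2))
  have := hconv.add_fderiv_sub_le hd' y
  simp only [sub_apply, InnerProductSpace.toDual_apply_apply,
    inner_sub_right, smul_apply, innerSL_apply_apply,
    real_inner_self_eq_norm_sq, nsmul_eq_mul, Nat.cast_ofNat, smul_eq_mul] at this
  rw [norm_sub_sq_real, inner_sub_right, real_inner_comm x y]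
  linarith

theorem StrongConvexOn.add_inner_add_le_of_subgradient {f : E → ℝ} {c x : E} {m : ℝ}
    (hf : StrongConvexOn Set.univ m f) (hc : ∀ z, f x + ⟪c, z - x⟫ ≤ f z) (y : E) :
    f x + ⟪c, y - x⟫ + m / 2 * ‖y - x‖ ^ 2 ≤ f y := by
  -- At `x + t • (y - x)` the subgradient bound and strong convexity give the claim with the
  -- quadratic term weighted by `1 - t`; let `t → 0⁺`.
  have hlim : Tendsto (fun t : ℝ => f x + ⟪c, y - x⟫ + (1 - t) * (m / 2 * ‖y - x‖ ^ 2))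
      (𝓝[>] 0) (𝓝 (f x + ⟪c, y - x⟫ + m / 2 * ‖y - x‖ ^ 2)) := by
    have hcont : Continuous fun t : ℝ => f x + ⟪c, y - x⟫ + (1 - t) * (m / 2 * ‖y - x‖ ^ 2) := by
      fun_prop
    simpa using (hcont.tendsto 0).mono_left nhdsWithin_le_nhds
  refine le_of_tendsto hlim ?_
  filter_upwards [Ioo_mem_nhdsGT one_pos] with t ⟨ht0, ht1⟩
  have hconv := hf.2 (Set.mem_univ x) (Set.mem_univ y) (sub_nonneg.2 ht1.le) ht0.le (by ring)
  have hsub := hc ((1 - t) • x + t • y)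
  have hseg : (1 - t) • x + t • y - x = t • (y - x) := by
    rw [smul_sub, sub_smul, one_smul]; abel
  rw [hseg, inner_smul_right] at hsub
  simp only [smul_eq_mul, norm_sub_rev x y] at hconv
  nlinarith

theorem real_inner_le_young (a b : E) {γ : ℝ} (hγ : 0 < γ) :
    ⟪a, b⟫ ≤ 1 / (2 * γ) * ‖a‖ ^ 2 + γ / 2 * ‖b‖ ^ 2 := by
  have hamgm := two_mul_le_add_mul_sq (a := ‖a‖) (b := ‖b‖) (inv_pos.2 hγ)
  rw [inv_inv] at hamgm
  calc ⟪a, b⟫ ≤ ‖a‖ * ‖b‖ := real_inner_le_norm a b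
    _ ≤ (γ⁻¹ * ‖a‖ ^ 2 + γ * ‖b‖ ^ 2) / 2 := by linarith
    _ = 1 / (2 * γ) * ‖a‖ ^ 2 + γ / 2 * ‖b‖ ^ 2 := by ring

end

theorem dca_page_template_inequality_general
    {n : ℕ}
    (G r₁ H r₂ F : EuclideanSpace ℝ (Fin n) → ℝ)
    (H' r₂' : EuclideanSpace ℝ (Fin n) → EuclideanSpace ℝ (Fin n))
    (ρ₁ ρ₂ ρ γ : ℝ)
    (g xt x1 : EuclideanSpace ℝ (Fin n))
    (hHdiff : ∀ x, HasGradientAt H (H' x) x)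
    (hr₂diff : ∀ x, HasGradientAt r₂ (r₂' x) x)
    (hGr₁ : StrongConvexOn Set.univ ρ₁ (fun x => G x + r₁ x))
    (hHr₂ : StrongConvexOn Set.univ ρ₂ (fun x => H x + r₂ x))
    (hρ : ρ = ρ₁ + ρ₂)
    (hF : ∀ x, F x = G x + r₁ x - (H x + r₂ x))
    (hopt : ∀ y, G x1 + r₁ x1 - ⟪g + r₂' xt, x1⟫ ≤ G y + r₁ y - ⟪g + r₂' xt, y⟫)
    (hγ : γ ∈ Set.Ioo 0 ρ) :
    F x1 ≤ F xt + (1 / (2 * γ)) * ‖g - H' xt‖ ^ 2 - ((ρ - γ) / 2) * ‖x1 - xt‖ ^ 2 := by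
  have hsubgrad : ∀ y, G x1 + r₁ x1 + ⟪g + r₂' xt, y - x1⟫ ≤ G y + r₁ y := fun y => by
    rw [inner_sub_right]
    linarith [hopt y]
  have hG := hGr₁.add_inner_add_le_of_subgradient hsubgrad xt
  have hgrad : HasGradientAt (fun x => H x + r₂ x) (H' xt + r₂' xt) xt := by
    rw [hasGradientAt_iff_hasFDerivAt, map_add]
    exact (hHdiff xt).hasFDerivAt.add (hr₂diff xt).hasFDerivAt
  have hH := hHr₂.add_inner_add_le_of_hasGradientAt hgrad x1
  have hyoung := real_inner_le_young (g - H' xt) (x1 - xt) hγ.1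
  have hcross : ⟪g + r₂' xt, xt - x1⟫ + ⟪H' xt + r₂' xt, x1 - xt⟫ = -⟪g - H' xt, x1 - xt⟫ := by
    rw [← neg_sub x1 xt, inner_neg_right, inner_add_left, inner_add_left, inner_sub_left]
    ring
  rw [norm_sub_rev xt x1] at hG
  rw [hF, hF, hρ]
  linarith

/-- Template descent inequality for DCA-PAGE (smooth r₂). -/
theorem dca_page_template_inequality
    {n : ℕ}
    (G r₁ H r₂ F : EuclideanSpace ℝ (Fin n) → ℝ)
    (H' r₂' : EuclideanSpace ℝ (Fin n) → EuclideanSpace ℝ (Fin n))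
    (ρ₁ ρ₂ ρ γ : ℝ)
    (g xt x1 : EuclideanSpace ℝ (Fin n))
    (hGconv : ConvexOn ℝ Set.univ G) (hr₁conv : ConvexOn ℝ Set.univ r₁)
    (hHdiff : ∀ x, HasGradientAt H (H' x) x)
    (hr₂diff : ∀ x, HasGradientAt r₂ (r₂' x) x)
    (hGr₁ : StrongConvexOn Set.univ ρ₁ (fun x => G x + r₁ x))
    (hHr₂ : StrongConvexOn Set.univ ρ₂ (fun x => H x + r₂ x))
    (hρ : ρ = ρ₁ + ρ₂)
    (hF : ∀ x, F x = G x + r₁ x - (H x + r₂ x))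
    (hopt : ∀ y, G x1 + r₁ x1 - ⟪g + r₂' xt, x1⟫ ≤ G y + r₁ y - ⟪g + r₂' xt, y⟫)
    (hγ : γ ∈ Set.Ioo 0 ρ) :
    F x1 ≤ F xt + (1 / (2 * γ)) * ‖g - H' xt‖ ^ 2 - ((ρ - γ) / 2) * ‖x1 - xt‖ ^ 2 :=
  dca_page_template_inequality_general G r₁ H r₂ F H' r₂' ρ₁ ρ₂ ρ γ g xt x1 hHdiff hr₂diff hGr₁ hHr₂
    hρ hF hopt hγ
end

section
/- Let T = ⌈(8Δ₀/(ε²ρ)) C⌉ with C = (L+L_{r₂})² + (1−p)L²/(pb′), and suppose p = 1/b′, b = N, b′ = ⌈√N⌉. Then the total gradient computation count b + T(pb + (1−p)b′) is at most N + (16Δ₀/(ε²ρ))((L+L_{r₂})² b′ + (b′−1)L²) + O(b'), i.e., of order O(N + √N/ε²). -/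
/-! With `p = 1/b'` the factor `p b'` in `C` cancels, and one PAGE step costs
`N/b' + (b' - 1) ≤ 2b'` gradients because `N ≤ ⌈√N⌉²`. Bounding the ceiling in `T` by
`(8Δ₀/(ε²ρ)) C + 1` and multiplying out gives the claim, the `+1` producing the `2b'` term. -/

open Real

lemma one_le_natCeil_sqrt {x : ℝ} (hx : 0 < x) : (1 : ℝ) ≤ ⌈√x⌉₊ := by
  exact_mod_cast Nat.one_le_ceil_iff.mpr (sqrt_pos.mpr hx)

lemma div_natCeil_sqrt_le {x : ℝ} (hx : 0 ≤ x) : x / ⌈√x⌉₊ ≤ ⌈√x⌉₊ := by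
  apply div_le_of_le_mul₀ (Nat.cast_nonneg _) (Nat.cast_nonneg _)
  calc x = √x * √x := (mul_self_sqrt hx).symm
    _ ≤ ⌈√x⌉₊ * ⌈√x⌉₊ := mul_self_le_mul_self (sqrt_nonneg x) (Nat.le_ceil _)

theorem gradient_computation_count_general
    (N : ℕ) (hN : 1 ≤ N) (ε Δ₀ ρ L Lr₂ : ℝ)
    (hΔ₀ : 0 < Δ₀) (hρ : 0 < ρ) :
    let b' : ℝ := (⌈Real.sqrt N⌉₊ : ℝ)
    let p : ℝ := 1 / b'
    let b : ℝ := (N : ℝ)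
    let C : ℝ := (L + Lr₂) ^ 2 + (1 - p) * L ^ 2 / (p * b')
    let T : ℝ := (⌈(8 * Δ₀ / (ε ^ 2 * ρ)) * C⌉₊ : ℝ)
    b + T * (p * b + (1 - p) * b') ≤
      (N : ℝ) + (16 * Δ₀ / (ε ^ 2 * ρ)) * ((L + Lr₂) ^ 2 * b' + (b' - 1) * L ^ 2)
        + 2 * b' := by
  intro b' p b C T
  set A := 8 * Δ₀ / (ε ^ 2 * ρ)
  have hb' : 1 ≤ b' := one_le_natCeil_sqrt (by exact_mod_cast hN)
  have hpb' : p * b' = 1 := one_div_mul_cancel (by positivity)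
  have hp : p ≤ 1 := by rw [← hpb']; exact le_mul_of_one_le_right (by positivity) hb'
  have hcost : p * b + (1 - p) * b' = N / b' + (b' - 1) := by
    rw [sub_mul, one_mul, hpb', one_div_mul_eq_div]
  have hcost_le : p * b + (1 - p) * b' ≤ 2 * b' := by
    linarith [div_natCeil_sqrt_le (Nat.cast_nonneg (α := ℝ) N)]
  have hcost_nonneg : 0 ≤ p * b + (1 - p) * b' := by
    rw [hcost]; have := sub_nonneg.mpr hb'; positivity
  have hC : C = (L + Lr₂) ^ 2 + (1 - p) * L ^ 2 := by simp only [C, hpb', div_one]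
  have hAC : 0 ≤ A * C := by rw [hC]; have := sub_nonneg.mpr hp; positivity
  have hT : T ≤ A * C + 1 := (Nat.ceil_lt_add_one hAC).le
  calc b + T * (p * b + (1 - p) * b') ≤ N + (A * C + 1) * (2 * b') := by
        gcongr b + ?_
        exact mul_le_mul hT hcost_le hcost_nonneg (by positivity)
    _ = _ := by rw [hC]; linear_combination (-2 * A * L ^ 2) * hpb'

/-- Gradient computation count of DCA-PAGE in the finite-sum setting: with
    T = ⌈(8Δ₀/(ε²ρ))C⌉, p = 1/b′, b = N, b′ = ⌈√N⌉, the total count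
    b + T(pb + (1−p)b′) is at most N + (16Δ₀/(ε²ρ))((L+Lr₂)²b′ + (b′−1)L²) + 2b′,
    i.e., of order O(N + √N/ε²). -/
theorem gradient_computation_count
    (N : ℕ) (hN : 1 ≤ N) (ε Δ₀ ρ L Lr₂ : ℝ)
    (hε : 0 < ε) (hΔ₀ : 0 < Δ₀) (hρ : 0 < ρ) (hL : 0 < L) (hLr₂ : 0 < Lr₂) :
    let b' : ℝ := (⌈Real.sqrt N⌉₊ : ℝ)
    let p : ℝ := 1 / b'
    let b : ℝ := (N : ℝ)
    let C : ℝ := (L + Lr₂) ^ 2 + (1 - p) * L ^ 2 / (p * b')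
    let T : ℝ := (⌈(8 * Δ₀ / (ε ^ 2 * ρ)) * C⌉₊ : ℝ)
    b + T * (p * b + (1 - p) * b') ≤
      (N : ℝ) + (16 * Δ₀ / (ε ^ 2 * ρ)) * ((L + Lr₂) ^ 2 * b' + (b' - 1) * L ^ 2)
        + 2 * b' :=
  gradient_computation_count_general N hN ε Δ₀ ρ L Lr₂ hΔ₀ hρ
end
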